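/- Let C be a positive integer and let Γ be a distance-regular graph with diameter D ≥ 3 such that b₂ ≤ C·c₂. Then the number v of vertices of Γ satisfies v ≤ (3 + C + C² + ⋯ + C^{D−2})·k₂. -/

import Mathlib

open SimpleGraph

/-- `IsDRG G D b c` : `G` is a distance-regular graph with diameter `D` and
intersection numbers `b i`, `c i`.  The valency is `k = b 0`. -/
structure IsDRG {V : Type*} [Fintype V] (G : SimpleGraph V) (D : ℕ) (b c : ℕ → ℕ) : Prop where
  connected : G.Connected
  one_le_diam : 1 ≤ D
  dist_le : ∀ x y : V, G.dist x y ≤ D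
  exists_dist_eq : ∃ x y : V, G.dist x y = D
  c_zero : c 0 = 0
  b_diam : b D = 0
  c_one : c 1 = 1
  count_c : ∀ i ≤ D, ∀ x y : V, G.dist x y = i →
      {z : V | G.Adj y z ∧ G.dist x z = i - 1}.ncard = c i
  count_b : ∀ i ≤ D, ∀ x y : V, G.dist x y = i →
      {z : V | G.Adj y z ∧ G.dist x z = i + 1}.ncard = b i

/-- `θ` is an eigenvalue of the adjacency matrix of `G`. -/
def IsAdjEigenvalue {V : Type*} [Fintype V] (G : SimpleGraph V) [DecidableRel G.Adj]
    (θ : ℝ) : Prop :=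
  ∃ v : V → ℝ, v ≠ 0 ∧ (G.adjMatrix ℝ).mulVec v = θ • v

/-- The `(t+1) × (t+1)` tridiagonal matrix `L_Γ(t)` with subdiagonal `c i`,
diagonal `a i = b 0 - b i - c i` (so `a 0 = 0`) and superdiagonal `b i`. -/
def Lmat (b c : ℕ → ℕ) (t : ℕ) : Matrix (Fin (t + 1)) (Fin (t + 1)) ℝ :=
  fun i j =>
    if (i : ℕ) = (j : ℕ) + 1 then (c (i : ℕ) : ℝ)
    else if (i : ℕ) = (j : ℕ) then (b 0 : ℝ) - (b (i : ℕ) : ℝ) - (c (i : ℕ) : ℝ)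
    else if (j : ℕ) = (i : ℕ) + 1 then (b (i : ℕ) : ℝ)
    else 0

/-- `θ` is an eigenvalue of the real matrix `M`. -/
def IsMatEigenvalue {n : Type*} [Fintype n] (M : Matrix n n ℝ) (θ : ℝ) : Prop :=
  ∃ v : n → ℝ, v ≠ 0 ∧ M.mulVec v = θ • v

/-- A Terwilliger graph: connected, non-complete, and for any two vertices at
distance two the set of their common neighbours is a clique. -/
def IsTerwilliger {V : Type*} (G : SimpleGraph V) : Prop :=
  G.Connected ∧ (∃ u v : V, u ≠ v ∧ ¬ G.Adj u v) ∧
    ∀ u v : V, G.dist u v = 2 → G.IsClique (G.commonNeighbors u v)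


/-!
Double counting the edges between the layers at distance `i` and `i + 1` from `x` gives
`k_i b_i = k_{i+1} c_{i+1}`. For `i ≥ 2` we have `b_i ≤ b_2 ≤ C c_2 ≤ C c_{i+1}`, so
`k_{i+1} ≤ C k_i` and hence `k_{2+j} ≤ C^j k_2`. Moreover `k_0 = 1 ≤ k_2`, and `k_1 ≤ k_2`
because `c_2 ≤ b_1` once `D ≥ 3`. Summing `k_0 + k_1 + ⋯ + k_D` gives the bound.
-/

open Finset

namespace SimpleGraph

variable {V : Type} {G : SimpleGraph V}

theorem Connected.exists_dist_eq_dist_eq (hconn : G.Connected) {x y : V} {n j : ℕ}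
    (hxy : G.dist x y = n) (hj : j ≤ n) :
    ∃ w, G.dist x w = j ∧ G.dist w y = n - j := by
  obtain ⟨p, hp⟩ := hconn.exists_walk_length_eq_dist x y
  have htake := dist_le (p.take j)
  have hdrop := dist_le (p.drop j)
  rw [Walk.take_length] at htake
  rw [Walk.drop_length] at hdrop
  have := hconn.dist_triangle (u := x) (v := p.getVert j) (w := y)
  exact ⟨p.getVert j, by omega, by omega⟩

theorem card_eq_sum_ncard_dist_eq [Fintype V] {x : V} {D : ℕ}
    (hdist : ∀ y, G.dist x y ≤ D) :
    Fintype.card V = ∑ i ∈ range (D + 1), {y | G.dist x y = i}.ncard := by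
  classical
  rw [← card_univ, card_eq_sum_card_fiberwise fun y _ ↦ mem_range.2 (Nat.lt_succ_of_le (hdist y))]
  simp only [Set.ncard_eq_toFinset_card', Set.toFinset_ofPred]

end SimpleGraph

namespace IsDRG

variable {V : Type} [Fintype V] {G : SimpleGraph V} {D : ℕ} {b c : ℕ → ℕ}

theorem exists_dist_eq_of_le (h : IsDRG G D b c) {i : ℕ} (hi : i ≤ D) : ∃ x y, G.dist x y = i := by
  obtain ⟨x, y, hxy⟩ := h.exists_dist_eq
  obtain ⟨w, hxw, -⟩ := h.connected.exists_dist_eq_dist_eq hxy hi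
  exact ⟨x, w, hxw⟩

theorem b_le_b_of_le (h : IsDRG G D b c) {i j : ℕ} (hji : j ≤ i) (hi : i ≤ D) : b i ≤ b j := by
  obtain ⟨x, y, hxy⟩ := h.exists_dist_eq_of_le hi
  obtain ⟨w, hxw, hwy⟩ := h.connected.exists_dist_eq_dist_eq hxy (Nat.sub_le i j)
  have hsub : {z | G.Adj y z ∧ G.dist x z = i + 1} ⊆ {z | G.Adj y z ∧ G.dist w z = j + 1} := by
    rintro z ⟨hyz, hxz⟩
    have := hyz.diff_dist_adj (u := w)
    have := h.connected.dist_triangle (u := x) (v := w) (w := z)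
    exact ⟨hyz, by omega⟩
  rw [← h.count_b i hi x y hxy, ← h.count_b j (by omega) w y (by omega)]
  exact Set.ncard_le_ncard hsub (Set.toFinite _)

theorem c_le_c_of_le (h : IsDRG G D b c) {i j : ℕ} (hij : i ≤ j) (hj : j ≤ D) : c i ≤ c j := by
  rcases Nat.eq_zero_or_pos i with rfl | hi
  · simp [h.c_zero]
  obtain ⟨x, y, hxy⟩ := h.exists_dist_eq_of_le hj
  obtain ⟨w, hxw, hwy⟩ := h.connected.exists_dist_eq_dist_eq hxy (Nat.sub_le j i)
  have hsub : {z | G.Adj y z ∧ G.dist w z = i - 1} ⊆ {z | G.Adj y z ∧ G.dist x z = j - 1} := by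
    rintro z ⟨hyz, hwz⟩
    have := hyz.diff_dist_adj (u := x)
    have := h.connected.dist_triangle (u := x) (v := w) (w := z)
    exact ⟨hyz, by omega⟩
  rw [← h.count_c i (by omega) w y (by omega), ← h.count_c j hj x y hxy]
  exact Set.ncard_le_ncard hsub (Set.toFinite _)

theorem c_le_b (h : IsDRG G D b c) {i j : ℕ} (hij : i + j ≤ D) : c i ≤ b j := by
  rcases Nat.eq_zero_or_pos i with rfl | hi
  · simp [h.c_zero]
  obtain ⟨x, y, hxy⟩ := h.exists_dist_eq_of_le hij
  obtain ⟨w, hxw, hwy⟩ := h.connected.exists_dist_eq_dist_eq hxy (Nat.le_add_right i j)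
  have hyw : G.dist y w = j := by rw [dist_comm]; omega
  have hsub : {z | G.Adj w z ∧ G.dist x z = i - 1} ⊆ {z | G.Adj w z ∧ G.dist y z = j + 1} := by
    rintro z ⟨hwz, hxz⟩
    have := hwz.diff_dist_adj (u := y)
    have := h.connected.dist_triangle (u := x) (v := z) (w := y)
    have : G.dist z y = G.dist y z := dist_comm
    exact ⟨hwz, by omega⟩
  rw [← h.count_c i (by omega) x w hxw, ← h.count_b j (by omega) y w hyw]
  exact Set.ncard_le_ncard hsub (Set.toFinite _)

theorem b_pos (h : IsDRG G D b c) {i : ℕ} (hi : i + 1 ≤ D) : 0 < b i :=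
  lt_of_lt_of_le (by simp [h.c_one]) (h.c_le_b (i := 1) (by omega))

theorem c_pos (h : IsDRG G D b c) {i : ℕ} (hi : 1 ≤ i) (hiD : i ≤ D) : 0 < c i :=
  lt_of_lt_of_le (by simp [h.c_one]) (h.c_le_c_of_le hi hiD)

theorem ncard_dist_eq_mul_b (h : IsDRG G D b c) (x : V) {i : ℕ} (hi : i + 1 ≤ D) :
    {y | G.dist x y = i}.ncard * b i = {y | G.dist x y = i + 1}.ncard * c (i + 1) := by
  classical
  simp only [Set.ncard_eq_toFinset_card', Set.toFinset_ofPred]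
  refine card_mul_eq_card_mul G.Adj (fun y hy ↦ ?_) (fun z hz ↦ ?_)
  · rw [← h.count_b i (by omega) x y (mem_filter.1 hy).2, ← Set.ncard_coe_finset]
    congr 1
    ext z
    simp [and_comm]
  · rw [← h.count_c (i + 1) hi x z (mem_filter.1 hz).2, ← Set.ncard_coe_finset]
    congr 1
    ext y
    simp [adj_comm, and_comm]

theorem ncard_dist_eq_zero (h : IsDRG G D b c) (x : V) : {y | G.dist x y = 0}.ncard = 1 := by
  have hzero : {y | G.dist x y = 0} = {x} := by
    ext y
    simp [h.connected.dist_eq_zero_iff, eq_comm]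
  rw [hzero, Set.ncard_singleton]

theorem ncard_dist_eq_pos (h : IsDRG G D b c) (x : V) {i : ℕ} (hi : i ≤ D) :
    0 < {y | G.dist x y = i}.ncard := by
  induction i with
  | zero => exact (h.ncard_dist_eq_zero x).symm ▸ Nat.one_pos
  | succ i ih =>
    have hprod : 0 < {y | G.dist x y = i + 1}.ncard * c (i + 1) :=
      h.ncard_dist_eq_mul_b x hi ▸ Nat.mul_pos (ih (by omega)) (h.b_pos hi)
    exact Nat.pos_of_mul_pos_right hprod

theorem ncard_dist_eq_le_succ (h : IsDRG G D b c) (x : V) {i : ℕ} (hi : 2 * i + 1 ≤ D) :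
    {y | G.dist x y = i}.ncard ≤ {y | G.dist x y = i + 1}.ncard := by
  have hcb : c (i + 1) ≤ b i := h.c_le_b (by omega)
  refine Nat.le_of_mul_le_mul_right ?_ (h.c_pos (by omega) (by omega) : 0 < c (i + 1))
  rw [← h.ncard_dist_eq_mul_b x (by omega)]
  exact Nat.mul_le_mul_left _ hcb

theorem ncard_dist_eq_succ_le {C m : ℕ} (h : IsDRG G D b c) (hbc : b m ≤ C * c m) (x : V)
    {i : ℕ} (hmi : m ≤ i) (hi : i + 1 ≤ D) :
    {y | G.dist x y = i + 1}.ncard ≤ C * {y | G.dist x y = i}.ncard := by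
  have hbi : b i ≤ C * c (i + 1) := calc
    b i ≤ b m := h.b_le_b_of_le hmi (by omega)
    _ ≤ C * c m := hbc
    _ ≤ C * c (i + 1) := Nat.mul_le_mul_left C (h.c_le_c_of_le (by omega) hi)
  refine Nat.le_of_mul_le_mul_right ?_ (h.c_pos (by omega) hi : 0 < c (i + 1))
  calc _ = {y | G.dist x y = i}.ncard * b i := (h.ncard_dist_eq_mul_b x hi).symm
    _ ≤ {y | G.dist x y = i}.ncard * (C * c (i + 1)) := Nat.mul_le_mul_left _ hbi
    _ = _ := by ring

theorem ncard_dist_eq_add_le {C m : ℕ} (h : IsDRG G D b c) (hbc : b m ≤ C * c m) (x : V)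
    {j : ℕ} (hj : m + j ≤ D) :
    {y | G.dist x y = m + j}.ncard ≤ C ^ j * {y | G.dist x y = m}.ncard := by
  induction j with
  | zero => simp
  | succ j ih =>
    calc _ ≤ C * {y | G.dist x y = m + j}.ncard :=
          h.ncard_dist_eq_succ_le hbc x (Nat.le_add_right m j) (by omega)
      _ ≤ C * (C ^ j * {y | G.dist x y = m}.ncard) := Nat.mul_le_mul_left C (ih (by omega))
      _ = _ := by ring

end IsDRG

theorem card_le_sum_pow_mul_k2_general {V : Type} [Fintype V] (G : SimpleGraph V) (D : ℕ)
    (b c : ℕ → ℕ) (h : IsDRG G D b c) (hD : 3 ≤ D) (C : ℕ)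
    (hbc : b 2 ≤ C * c 2) :
    ∀ x : V, Fintype.card V ≤
      (3 + ∑ j ∈ Finset.Icc 1 (D - 2), C ^ j) * {y : V | G.dist x y = 2}.ncard := by
  intro x
  set k : ℕ → ℕ := fun i ↦ {y | G.dist x y = i}.ncard
  obtain ⟨n, rfl⟩ : ∃ n, D = n + 2 := ⟨D - 2, by omega⟩
  have hk0 : k 0 ≤ k 2 := (h.ncard_dist_eq_zero x).trans_le (h.ncard_dist_eq_pos x (by omega))
  have hk1 : k 1 ≤ k 2 := h.ncard_dist_eq_le_succ x (by omega)
  have htail : ∑ j ∈ range (n + 1), k (2 + j) ≤ ∑ j ∈ range (n + 1), C ^ j * k 2 :=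
    sum_le_sum fun j hj ↦ h.ncard_dist_eq_add_le hbc x (by simp at hj; omega)
  calc Fintype.card V = ∑ i ∈ range (n + 2 + 1), k i := card_eq_sum_ncard_dist_eq (h.dist_le x)
    _ = k 0 + k 1 + ∑ j ∈ range (n + 1), k (2 + j) := by
      rw [sum_range_succ', sum_range_succ']
      ring_nf
    _ ≤ k 2 + k 2 + ∑ j ∈ range (n + 1), C ^ j * k 2 := by gcongr
    _ = (3 + ∑ j ∈ Icc 1 (n + 2 - 2), C ^ j) * k 2 := by
      rw [← sum_mul, range_eq_Ico, sum_eq_sum_Ico_succ_bot n.succ_pos, Nat.add_sub_cancel,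
        ← Ico_add_one_right_eq_Icc, zero_add, Nat.succ_eq_add_one]
      ring

/-- If `Γ` is distance-regular with diameter `D ≥ 3` and `b₂ ≤ C·c₂`, then the number of
vertices satisfies `v ≤ (3 + C + C² + ⋯ + C^(D-2)) · k₂`. -/
theorem card_le_sum_pow_mul_k2 {V : Type} [Fintype V] (G : SimpleGraph V) (D : ℕ)
    (b c : ℕ → ℕ) (h : IsDRG G D b c) (hD : 3 ≤ D) (C : ℕ) (hC : 0 < C)
    (hbc : b 2 ≤ C * c 2) :
    ∀ x : V, Fintype.card V ≤
      (3 + ∑ j ∈ Finset.Icc 1 (D - 2), C ^ j) * {y : V | G.dist x y = 2}.ncard :=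
  card_le_sum_pow_mul_k2_general G D b c h hD C hbc
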